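/- arXiv:1908.03616 — 2 statements merged into one kernel-verified Lean document; each statement's English description precedes it below -/
import Mathlib

section
/- Let N and N₁ be coprime positive integers. Then the representation of SL(2,ℤ) induced from the trivial representation of Γ₁(N·N₁) is isomorphic to the tensor product of the representations induced from the trivial representations of Γ₁(N) and Γ₁(N₁), i.e., Ind_{Γ₁(NN₁)}^{SL(2,ℤ)} 1 ≅ (Ind_{Γ₁(N)}^{SL(2,ℤ)} 1) ⊗ (Ind_{Γ₁(N₁)}^{SL(2,ℤ)} 1). -/
open scoped MatrixGroups TensorProduct

/-- The set of right cosets `Γ\SL(2,ℤ)`. -/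
def rcoset (Γ : Subgroup SL(2, ℤ)) := Quotient (QuotientGroup.rightRel Γ)

/-- Right multiplication of `SL(2, ℤ)` on the right cosets `Γ\SL(2,ℤ)`. -/
def rcosetMul (Γ : Subgroup SL(2, ℤ)) (g : SL(2, ℤ)) : rcoset Γ → rcoset Γ :=
  Quotient.map' (· * g) (by
    intro a b h
    rw [QuotientGroup.rightRel_apply] at h ⊢
    simpa [mul_assoc] using h)

/-- The representation of `SL(2, ℤ)` induced from the trivial one-dimensional
representation of a subgroup `Γ`, realized on the space of complex-valued functions
on the right cosets `Γ\SL(2,ℤ)`, with `SL(2, ℤ)` acting by right translation. -/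
def indTrivial (Γ : Subgroup SL(2, ℤ)) : Representation ℂ SL(2, ℤ) (rcoset Γ → ℂ) where
  toFun g :=
    { toFun := fun f => f ∘ rcosetMul Γ g
      map_add' := fun _ _ => rfl
      map_smul' := fun _ _ => rfl }
  map_one' := by
    apply LinearMap.ext; intro f; funext x
    induction x using Quotient.inductionOn' with
    | h a =>
      simp [rcosetMul, Quotient.map'_mk'']
      show f (Quotient.mk'' (a * 1)) = f (Quotient.mk'' a)
      rw [mul_one]
  map_mul' g h := by
    apply LinearMap.ext; intro f; funext x
    induction x using Quotient.inductionOn' with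
    | h a =>
      simp [rcosetMul, Quotient.map'_mk'', mul_assoc]
      show f (Quotient.mk'' (a * (g * h))) = f (Quotient.mk'' (a * g * h))
      rw [mul_assoc]

/-!
Sending a coset to its images gives a bijection
`Γ₁(NN₁)\SL(2,ℤ) ≃ Γ₁(N)\SL(2,ℤ) × Γ₁(N₁)\SL(2,ℤ)` commuting with right translation.
It is injective because `Γ₁(NN₁) = Γ₁(N) ∩ Γ₁(N₁)`, and surjective because
`Γ₁(N) Γ₁(N₁) = SL(2,ℤ)`: the coset `Γ₁(N) g` only depends on the bottom row of `g` modulo `N`,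
so by the Chinese remainder theorem it suffices to lift a pair `(c, d)` that is coprime modulo
`M = NN₁` to a coprime pair of integers, and to complete that to a matrix in `SL(2,ℤ)`. For the
lift, take `c ≠ 0` and replace `d` by `d + t M`, where `t` is the product of the primes dividing `c`
but not `d`. Finally, functions on a product of two sets, one of them finite, form the tensor
product of the two function spaces, so the bijection yields the isomorphism of representations.
-/

open UniqueFactorizationMonoid in
theorem Int.exists_isCoprime_add_mul {c d M : ℤ} (hc : c ≠ 0)
    (h : ∀ p : ℤ, Prime p → p ∣ c → p ∣ d → ¬ p ∣ M) : ∃ t, IsCoprime c (d + t * M) := by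
  classical
  set S := (normalizedFactors c).toFinset.filter (fun q => ¬ q ∣ d)
  refine ⟨∏ q ∈ S, q, isCoprime_of_prime_dvd (fun h => hc h.1) fun p hp hpc hpdt => ?_⟩
  by_cases hpd : p ∣ d
  · have hptM : p ∣ (∏ q ∈ S, q) * M := by simpa using dvd_sub hpdt hpd
    obtain ⟨q, hqS, hpq⟩ :=
      (hp.dvd_finsetProd_iff _).1 ((hp.dvd_or_dvd hptM).resolve_right (h p hp hpc hpd))
    have hq : Prime q :=
      prime_of_normalized_factor q (Multiset.mem_toFinset.1 (Finset.mem_filter.1 hqS).1)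
    exact (Finset.mem_filter.1 hqS).2 ((hp.associated_of_dvd hq hpq).symm.dvd.trans hpd)
  · obtain ⟨q, hq, hpq⟩ := exists_mem_normalizedFactors_of_dvd hc hp.irreducible hpc
    have hqS : q ∈ S :=
      Finset.mem_filter.2 ⟨Multiset.mem_toFinset.2 hq, fun hqd => hpd (hpq.dvd.trans hqd)⟩
    have hpt : p ∣ ∏ q ∈ S, q := hpq.dvd.trans (Finset.dvd_prod_of_mem _ hqS)
    exact hpd (by simpa using dvd_sub hpdt (hpt.mul_right M))

theorem ZMod.exists_isCoprime_intCast_eq {M : ℕ} {x y : ZMod M} (h : IsCoprime x y) :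
    ∃ c d : ℤ, IsCoprime c d ∧ (c : ZMod M) = x ∧ (d : ZMod M) = y := by
  obtain rfl | _ := eq_zero_or_neZero M
  · exact ⟨x, y, h, Int.cast_id, Int.cast_id⟩
  obtain ⟨P, Q, hPQ⟩ := h
  obtain ⟨P, rfl⟩ := ZMod.intCast_surjective P
  obtain ⟨Q, rfl⟩ := ZMod.intCast_surjective Q
  set c : ℤ := (x.val : ℤ) + M
  set d : ℤ := (y.val : ℤ)
  have hcx : (c : ZMod M) = x := by simp [c]
  have hdy : (d : ZMod M) = y := by simp [d]
  have hM : (M : ℤ) ∣ P * c + Q * d - 1 := by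
    rw [← ZMod.intCast_zmod_eq_zero_iff_dvd]
    push_cast
    rw [hcx, hdy, hPQ, sub_self]
  obtain ⟨t, ht⟩ := Int.exists_isCoprime_add_mul (c := c) (d := d) (M := M)
    (by have := NeZero.pos M; omega)
    fun p hp hpc hpd hpM => hp.not_dvd_one <| by
      simpa using dvd_sub ((hpc.mul_left P).add (hpd.mul_left Q)) (hpM.trans hM)
  exact ⟨c, d + t * M, ht, hcx, by simp [hdy]⟩

theorem ZMod.chineseRemainder_intCast {m n : ℕ} (h : m.Coprime n) (x : ℤ) :
    ZMod.chineseRemainder h x = ((x : ZMod m), (x : ZMod n)) := by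
  ext <;> simp

theorem IsCoprime.prodMk {R S : Type*} [CommSemiring R] [CommSemiring S] {a b : R} {c d : S}
    (hab : IsCoprime a b) (hcd : IsCoprime c d) : IsCoprime (a, c) (b, d) := by
  obtain ⟨u, v, huv⟩ := hab
  obtain ⟨u', v', huv'⟩ := hcd
  exact ⟨(u, u'), (v, v'), Prod.ext huv huv'⟩

namespace CongruenceSubgroup

theorem Gamma1_mul_eq_inf {N N₁ : ℕ} (hco : N.Coprime N₁) :
    Gamma1 (N * N₁) = Gamma1 N ⊓ Gamma1 N₁ := by
  ext A
  simp only [Subgroup.mem_inf, Gamma1_mem, ← (ZMod.chineseRemainder hco).injective.eq_iff,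
    ZMod.chineseRemainder_intCast, map_one, map_zero, Prod.ext_iff, Prod.fst_one, Prod.snd_one,
    Prod.fst_zero, Prod.snd_zero]
  tauto

theorem mul_inv_mem_Gamma1_of_bottom_row_eq {N : ℕ} {a c : SL(2, ℤ)}
    (h : ∀ j, ((c 1 j : ℤ) : ZMod N) = a 1 j) : c * a⁻¹ ∈ Gamma1 N := by
  have ha := congrArg (Int.cast : ℤ → ZMod N) a.det_coe
  have hc := congrArg (Int.cast : ℤ → ZMod N) c.det_coe
  simp only [Matrix.det_fin_two, Int.cast_sub, Int.cast_mul, Int.cast_one] at ha hc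
  rw [h 0, h 1] at hc
  rw [Gamma1_mem, Matrix.SpecialLinearGroup.coe_mul, Matrix.SpecialLinearGroup.coe_inv,
    Matrix.adjugate_fin_two]
  simp only [Fin.isValue, Matrix.mul_apply, Matrix.of_apply, Matrix.cons_val',
    Matrix.cons_val_zero, Matrix.cons_val_fin_one, Fin.sum_univ_two, Matrix.cons_val_one, mul_neg,
    Int.cast_add, Int.cast_mul, Int.cast_neg, h 0, h 1]
  exact ⟨by linear_combination hc, by linear_combination ha, by ring⟩

theorem exists_mul_inv_mem_Gamma1_of_coprime {N N₁ : ℕ} (hco : N.Coprime N₁) (a b : SL(2, ℤ)) :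
    ∃ c : SL(2, ℤ), c * a⁻¹ ∈ Gamma1 N ∧ c * b⁻¹ ∈ Gamma1 N₁ := by
  let e := ZMod.chineseRemainder hco
  let v : Fin 2 → ZMod (N * N₁) := fun j => e.symm ((a 1 j : ZMod N), (b 1 j : ZMod N₁))
  have hv : IsCoprime (v 0) (v 1) := by
    have ha := (ModularGroup.bottom_row_coprime a).map (Int.castRingHom (ZMod N))
    have hb := (ModularGroup.bottom_row_coprime b).map (Int.castRingHom (ZMod N₁))
    exact (ha.prodMk hb).map e.symm.toRingHom
  obtain ⟨w₀, w₁, hw, hw₀, hw₁⟩ := ZMod.exists_isCoprime_intCast_eq hv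
  obtain ⟨c, -, hc⟩ := ModularGroup.bottom_row_surj (R := ℤ)
    (show IsCoprime (![w₀, w₁] 0) (![w₀, w₁] 1) from hw)
  have hce (j : Fin 2) : e (c 1 j : ZMod (N * N₁)) = ((a 1 j : ZMod N), (b 1 j : ZMod N₁)) := by
    have hcj : ((c 1 j : ℤ) : ZMod (N * N₁)) = v j := by
      rw [show c 1 j = ![w₀, w₁] j from congrFun hc j]
      fin_cases j
      exacts [hw₀, hw₁]
    rw [hcj]
    exact e.apply_symm_apply _
  refine ⟨c, mul_inv_mem_Gamma1_of_bottom_row_eq fun j => ?_,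
    mul_inv_mem_Gamma1_of_bottom_row_eq fun j => ?_⟩
  · simpa using congrArg Prod.fst (hce j)
  · simpa using congrArg Prod.snd (hce j)

end CongruenceSubgroup

instance rcoset.finite (Γ : Subgroup SL(2, ℤ)) [Γ.FiniteIndex] : Finite (rcoset Γ) :=
  Finite.of_equiv _ (QuotientGroup.quotientRightRelEquivQuotientLeftRel Γ).symm

def rcosetMap {Γ Δ : Subgroup SL(2, ℤ)} (h : Γ ≤ Δ) : rcoset Γ → rcoset Δ :=
  Quotient.map' id fun _ _ hab => by
    rw [QuotientGroup.rightRel_apply] at hab ⊢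
    exact h hab

theorem rcosetMap_rcosetMul {Γ Δ : Subgroup SL(2, ℤ)} (h : Γ ≤ Δ) (g : SL(2, ℤ))
    (x : rcoset Γ) : rcosetMap h (rcosetMul Γ g x) = rcosetMul Δ g (rcosetMap h x) := by
  induction x using Quotient.inductionOn' with
  | h a => rfl

section InfEquiv

variable (H K : Subgroup SL(2, ℤ)) (hHK : ∀ a b : SL(2, ℤ), ∃ c, c * a⁻¹ ∈ H ∧ c * b⁻¹ ∈ K)

noncomputable def rcosetInfEquivProd : rcoset (H ⊓ K) ≃ rcoset H × rcoset K :=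
  Equiv.ofBijective (fun x => (rcosetMap inf_le_left x, rcosetMap inf_le_right x)) <| by
    constructor
    · rintro ⟨a⟩ ⟨b⟩ hab
      obtain ⟨hH, hK⟩ := Prod.ext_iff.1 hab
      exact Quotient.sound' <| QuotientGroup.rightRel_apply.2
        ⟨QuotientGroup.rightRel_apply.1 (Quotient.exact' hH),
          QuotientGroup.rightRel_apply.1 (Quotient.exact' hK)⟩
    · rintro ⟨⟨a⟩, ⟨b⟩⟩
      obtain ⟨c, hca, hcb⟩ := hHK a b
      refine ⟨Quotient.mk'' c, Prod.ext ?_ ?_⟩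
      · exact (Quotient.sound' (QuotientGroup.rightRel_apply.2 hca)).symm
      · exact (Quotient.sound' (QuotientGroup.rightRel_apply.2 hcb)).symm

theorem rcosetInfEquivProd_rcosetMul (g : SL(2, ℤ)) (x : rcoset (H ⊓ K)) :
    rcosetInfEquivProd H K hHK (rcosetMul _ g x) =
      Prod.map (rcosetMul H g) (rcosetMul K g) (rcosetInfEquivProd H K hHK x) :=
  Prod.ext (rcosetMap_rcosetMul _ g x) (rcosetMap_rcosetMul _ g x)

end InfEquiv

section FunTensor

open TensorProduct LinearMap

variable (R X Y : Type*) [CommSemiring R] [Fintype Y] [DecidableEq Y]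

noncomputable def funTensorEquiv : (X → R) ⊗[R] (Y → R) ≃ₗ[R] (X × Y → R) :=
  piScalarRight R R (X → R) Y ≪≫ₗ (LinearEquiv.curry R R Y X).symm ≪≫ₗ
    LinearEquiv.funCongrLeft R R (Equiv.prodComm X Y)

variable {R X Y}

@[simp]
theorem funTensorEquiv_tmul (f : X → R) (g : Y → R) (p : X × Y) :
    funTensorEquiv R X Y (f ⊗ₜ g) p = f p.1 * g p.2 := by
  obtain ⟨x, y⟩ := p
  simp [funTensorEquiv, mul_comm]

theorem funTensorEquiv_comp_map_funLeft {X' Y' : Type*} [Fintype Y'] [DecidableEq Y']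
    (a : X → X') (b : Y → Y') :
    (funTensorEquiv R X Y).toLinearMap ∘ₗ map (funLeft R R a) (funLeft R R b) =
      funLeft R R (Prod.map a b) ∘ₗ (funTensorEquiv R X' Y').toLinearMap :=
  TensorProduct.ext' fun f g => by ext p; simp [funLeft_apply]

end FunTensor

theorem indTrivial_eq_funLeft (Γ : Subgroup SL(2, ℤ)) (g : SL(2, ℤ)) :
    indTrivial Γ g = LinearMap.funLeft ℂ ℂ (rcosetMul Γ g) :=
  rfl

theorem indTrivial_inf_iso_tprod (H K : Subgroup SL(2, ℤ)) [Finite (rcoset K)]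
    (hHK : ∀ a b : SL(2, ℤ), ∃ c, c * a⁻¹ ∈ H ∧ c * b⁻¹ ∈ K) :
    ∃ e : (rcoset (H ⊓ K) → ℂ) ≃ₗ[ℂ] (rcoset H → ℂ) ⊗[ℂ] (rcoset K → ℂ),
      ∀ (g : SL(2, ℤ)) (v : rcoset (H ⊓ K) → ℂ),
        e (indTrivial (H ⊓ K) g v) = ((indTrivial H).tprod (indTrivial K)) g (e v) := by
  classical
  have := Fintype.ofFinite (rcoset K)
  let σ := rcosetInfEquivProd H K hHK
  let Φ := funTensorEquiv ℂ (rcoset H) (rcoset K)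
  refine ⟨LinearEquiv.funCongrLeft ℂ ℂ σ.symm ≪≫ₗ Φ.symm, fun g v => ?_⟩
  have hσ (p : rcoset H × rcoset K) :
      σ.symm (Prod.map (rcosetMul H g) (rcosetMul K g) p) = rcosetMul _ g (σ.symm p) := by
    rw [Equiv.symm_apply_eq, rcosetInfEquivProd_rcosetMul, Equiv.apply_symm_apply]
  have hΦ (t) : Φ (TensorProduct.map (indTrivial H g) (indTrivial K g) t) =
      LinearMap.funLeft ℂ ℂ (Prod.map (rcosetMul H g) (rcosetMul K g)) (Φ t) :=
    LinearMap.congr_fun (funTensorEquiv_comp_map_funLeft _ _) t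
  rw [Representation.tprod_apply, LinearEquiv.trans_apply, LinearEquiv.trans_apply,
    LinearEquiv.symm_apply_eq, hΦ, LinearEquiv.apply_symm_apply]
  ext p
  simp [LinearEquiv.funCongrLeft_apply, LinearMap.funLeft_apply, indTrivial_eq_funLeft, hσ]

theorem indTrivial_mul_iso_tprod_general (N N₁ : ℕ) (hN₁ : 0 < N₁)
    (hco : Nat.Coprime N N₁) :
    ∃ e : (rcoset (CongruenceSubgroup.Gamma1 (N * N₁)) → ℂ) ≃ₗ[ℂ]
        (rcoset (CongruenceSubgroup.Gamma1 N) → ℂ) ⊗[ℂ]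
          (rcoset (CongruenceSubgroup.Gamma1 N₁) → ℂ),
      ∀ (g : SL(2, ℤ)) (v : rcoset (CongruenceSubgroup.Gamma1 (N * N₁)) → ℂ),
        e ((indTrivial (CongruenceSubgroup.Gamma1 (N * N₁))) g v) =
          ((indTrivial (CongruenceSubgroup.Gamma1 N)).tprod
            (indTrivial (CongruenceSubgroup.Gamma1 N₁))) g (e v) := by
  have : NeZero N₁ := ⟨hN₁.ne'⟩
  rw [CongruenceSubgroup.Gamma1_mul_eq_inf hco]
  exact indTrivial_inf_iso_tprod _ _ (CongruenceSubgroup.exists_mul_inv_mem_Gamma1_of_coprime hco)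

/-- For coprime positive integers `N` and `N₁`,
`Ind_{Γ₁(N·N₁)}^{SL(2,ℤ)} 𝟙 ≅ (Ind_{Γ₁(N)}^{SL(2,ℤ)} 𝟙) ⊗ (Ind_{Γ₁(N₁)}^{SL(2,ℤ)} 𝟙)`
as representations of `SL(2, ℤ)`. -/
theorem indTrivial_mul_iso_tprod (N N₁ : ℕ) (hN : 0 < N) (hN₁ : 0 < N₁)
    (hco : Nat.Coprime N N₁) :
    ∃ e : (rcoset (CongruenceSubgroup.Gamma1 (N * N₁)) → ℂ) ≃ₗ[ℂ]
        (rcoset (CongruenceSubgroup.Gamma1 N) → ℂ) ⊗[ℂ]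
          (rcoset (CongruenceSubgroup.Gamma1 N₁) → ℂ),
      ∀ (g : SL(2, ℤ)) (v : rcoset (CongruenceSubgroup.Gamma1 (N * N₁)) → ℂ),
        e ((indTrivial (CongruenceSubgroup.Gamma1 (N * N₁))) g v) =
          ((indTrivial (CongruenceSubgroup.Gamma1 N)).tprod
            (indTrivial (CongruenceSubgroup.Gamma1 N₁))) g (e v) :=
  indTrivial_mul_iso_tprod_general N N₁ hN₁ hco
end

section
/- Let k ≥ 3 and let N, M be positive integers. For any integers c', d' and any matrix [[α,β],[0,δ]] with α,β,δ nonnegative integers, αδ = M, the weight-k slash action of [[α,β],[0,δ]] on the level-N Eisenstein series G_{k,N,c',d'}(τ) = Σ_{(c,d)≡(c',d') mod N, (c,d)≠(0,0)} (cτ+d)^{-k} is a finite linear combination of level-MN Eisenstein series G_{k,MN,c'',d''}(τ), where the sum ranges over residues c'' ≡ αc' (mod αN) and d'' ≡ δd' + βc' (mod gcd(β,δ)N) taken modulo MN. -/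
/-!
Substituting `(ατ + β)/δ` turns the term of `(c, d)` into `δ^k` times the term of
`(cα, cβ + dδ) = (c, d) [[α, β], [0, δ]]` at `τ`. So the left-hand side is the sum over the
nonzero points of the image `L` of the residue class of `(c', d')` mod `N` under this map. As
`L` is a union of residue classes mod `αδN = MN`, splitting the absolutely convergent sum along
the finitely many classes inside `L` writes it as a sum of level-`MN` Eisenstein series, each
with coefficient `1`.
-/

open Complex

/-- The level-`N` Eisenstein series of weight `k` attached to the residue pair `(c', d')`
mod `N`: the sum over nonzero integer pairs `(c, d)` congruent to `(c', d')` mod `N` of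
`(c z + d)^{-k}` (viewed as a function of a complex variable; for `3 ≤ k` the series
converges absolutely when `z` lies in the upper half-plane). -/
noncomputable def eisG (k N : ℕ) (c' d' : ℤ) (z : ℂ) : ℂ :=
  ∑' p : {p : ℤ × ℤ // p ≠ 0 ∧ p.1 ≡ c' [ZMOD (N : ℤ)] ∧ p.2 ≡ d' [ZMOD (N : ℤ)]},
    ((p.1.1 : ℂ) * z + (p.1.2 : ℂ)) ^ (-(k : ℤ))

def residueClass (m : ℤ) (p : ℤ × ℤ) : Set (ℤ × ℤ) :=
  {q | q.1 ≡ p.1 [ZMOD m] ∧ q.2 ≡ p.2 [ZMOD m]}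

noncomputable def residueBox (m : ℤ) : Finset (ℤ × ℤ) := Finset.Ico 0 m ×ˢ Finset.Ico 0 m

theorem mem_residueClass_comm {m : ℤ} {p q : ℤ × ℤ} :
    q ∈ residueClass m p ↔ p ∈ residueClass m q :=
  ⟨fun h => ⟨h.1.symm, h.2.symm⟩, fun h => ⟨h.1.symm, h.2.symm⟩⟩

theorem pairwiseDisjoint_residueClass (m : ℤ) :
    (residueBox m : Set (ℤ × ℤ)).PairwiseDisjoint (residueClass m) := by
  intro p hp p' hp' hne
  refine Set.disjoint_left.2 fun q hq hq' => hne ?_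
  simp only [residueBox, Finset.coe_product, Set.mem_prod, Finset.coe_Ico, Set.mem_Ico] at hp hp'
  have h1 := hq.1.symm.trans hq'.1
  have h2 := hq.2.symm.trans hq'.2
  rw [Int.ModEq, Int.emod_eq_of_lt hp.1.1 hp.1.2, Int.emod_eq_of_lt hp'.1.1 hp'.1.2] at h1
  rw [Int.ModEq, Int.emod_eq_of_lt hp.2.1 hp.2.2, Int.emod_eq_of_lt hp'.2.1 hp'.2.2] at h2
  exact Prod.ext h1 h2

theorem biUnion_residueClass_filter_residueBox {m : ℤ} (hm : 0 < m) {L : Set (ℤ × ℤ)}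
    [DecidablePred (· ∈ L)] (hL : ∀ p ∈ L, residueClass m p ⊆ L) :
    ⋃ p ∈ (residueBox m).filter (· ∈ L), residueClass m p = L := by
  refine subset_antisymm (Set.iUnion₂_subset fun p hp => hL p (Finset.mem_filter.1 hp).2) ?_
  intro q hq
  have hq₀ : (q.1 % m, q.2 % m) ∈ residueClass m q := ⟨Int.mod_modEq _ _, Int.mod_modEq _ _⟩
  refine Set.mem_biUnion (Finset.mem_filter.2 ⟨?_, hL q hq hq₀⟩) (mem_residueClass_comm.1 hq₀)
  simp only [residueBox, Finset.mem_product, Finset.mem_Ico]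
  exact ⟨⟨Int.emod_nonneg _ hm.ne', Int.emod_lt_of_pos _ hm⟩,
    ⟨Int.emod_nonneg _ hm.ne', Int.emod_lt_of_pos _ hm⟩⟩

def upperTriangularRowMul (α β δ : ℤ) (p : ℤ × ℤ) : ℤ × ℤ := (p.1 * α, p.1 * β + p.2 * δ)

section upperTriangularRowMul

variable {α β δ : ℤ}

@[simp]
theorem upperTriangularRowMul_zero : upperTriangularRowMul α β δ 0 = 0 := by
  simp [upperTriangularRowMul]

theorem upperTriangularRowMul_injective (hα : α ≠ 0) (hδ : δ ≠ 0) :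
    Function.Injective (upperTriangularRowMul α β δ) := by
  rintro ⟨c, d⟩ ⟨c', d'⟩ h
  simp only [upperTriangularRowMul, Prod.mk.injEq] at h
  obtain rfl := mul_right_cancel₀ hα h.1
  simpa using mul_right_cancel₀ hδ (add_left_cancel h.2)

theorem residueClass_subset_image_residueClass (N : ℤ) (p : ℤ × ℤ) {q : ℤ × ℤ}
    (hq : q ∈ upperTriangularRowMul α β δ '' residueClass N p) :
    residueClass (α * δ * N) q ⊆ upperTriangularRowMul α β δ '' residueClass N p := by
  obtain ⟨⟨c, d⟩, ⟨hc, hd⟩, rfl⟩ := hq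
  rintro ⟨c₁, d₁⟩ ⟨h₁, h₂⟩
  obtain ⟨s, hs⟩ := Int.modEq_iff_dvd.1 h₁.symm
  obtain ⟨t, ht⟩ := Int.modEq_iff_dvd.1 h₂.symm
  simp only [upperTriangularRowMul] at hs ht
  refine ⟨(c + δ * N * s, d + α * N * t - N * s * β), ⟨?_, ?_⟩, ?_⟩
  · exact (Int.modEq_iff_dvd.2 ⟨-(δ * s), by ring⟩).trans hc
  · exact (Int.modEq_iff_dvd.2 ⟨-(α * t - s * β), by ring⟩).trans hd
  · simp only [upperTriangularRowMul, Prod.mk.injEq]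
    constructor
    · linear_combination -hs
    · linear_combination -ht

theorem modEq_of_mem_image_residueClass (N c' d' : ℤ) {q : ℤ × ℤ}
    (hq : q ∈ upperTriangularRowMul α β δ '' residueClass N (c', d')) :
    q.1 ≡ α * c' [ZMOD α * N] ∧ q.2 ≡ δ * d' + β * c' [ZMOD Int.gcd β δ * N] := by
  obtain ⟨⟨c, d⟩, ⟨hc, hd⟩, rfl⟩ := hq
  refine ⟨by simpa [upperTriangularRowMul, mul_comm] using hc.mul_left' (c := α), ?_⟩
  have hβc : β * c ≡ β * c' [ZMOD Int.gcd β δ * N] :=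
    (hc.mul_left' (c := β)).of_dvd (mul_dvd_mul_right (Int.gcd_dvd_left β δ) N)
  have hδd : δ * d ≡ δ * d' [ZMOD Int.gcd β δ * N] :=
    (hd.mul_left' (c := δ)).of_dvd (mul_dvd_mul_right (Int.gcd_dvd_right β δ) N)
  simpa [upperTriangularRowMul, mul_comm, add_comm] using hβc.add hδd

end upperTriangularRowMul

noncomputable def eisTerm (k : ℕ) (z : ℂ) (p : ℤ × ℤ) : ℂ := ((p.1 : ℂ) * z + p.2) ^ (-(k : ℤ))

theorem eisG_eq_tsum_residueClass (k N : ℕ) (c' d' : ℤ) (z : ℂ) :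
    eisG k N c' d' z = ∑' q : ↥(residueClass N (c', d') \ {0}), eisTerm k z q :=
  (Equiv.tsum_eq (Equiv.subtypeEquivRight fun q => by simp [residueClass, and_comm])
    fun q => eisTerm k z q.1).symm

theorem summable_eisTerm {k : ℕ} (hk : 3 ≤ k) (τ : UpperHalfPlane) : Summable (eisTerm k τ) := by
  have h := (EisensteinSeries.summable_norm_eisSummand (k := k) (by exact_mod_cast hk) τ).of_norm
  refine ((finTwoArrowEquiv ℤ).symm.summable_iff.2 h).congr fun q => ?_
  simp [EisensteinSeries.eisSummand, eisTerm, finTwoArrowEquiv]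

theorem eisTerm_upperTriangular (k : ℕ) {α β δ : ℤ} (hδ : δ ≠ 0) (z : ℂ) (p : ℤ × ℤ) :
    eisTerm k ((α * z + β) / δ) p =
      (δ : ℂ) ^ (k : ℤ) * eisTerm k z (upperTriangularRowMul α β δ p) := by
  have hδ' : (δ : ℂ) ≠ 0 := by exact_mod_cast hδ
  have h : (p.1 : ℂ) * ((α * z + β) / δ) + p.2 =
      (((p.1 * α : ℤ) : ℂ) * z + ((p.1 * β + p.2 * δ : ℤ) : ℂ)) / δ := by
    push_cast
    field_simp
    ring
  rw [eisTerm, eisTerm, h, div_zpow, zpow_neg (δ : ℂ), div_inv_eq_mul, mul_comm]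
  rfl

theorem zpow_neg_mul_eisG_eq_tsum_image (k N : ℕ) (c' d' : ℤ) {α β δ : ℤ} (hα : α ≠ 0)
    (hδ : δ ≠ 0) (z : ℂ) :
    (δ : ℂ) ^ (-(k : ℤ)) * eisG k N c' d' ((α * z + β) / δ) =
      ∑' q : ↥(upperTriangularRowMul α β δ '' residueClass N (c', d') \ {0}), eisTerm k z q := by
  have hδ' : (δ : ℂ) ≠ 0 := by exact_mod_cast hδ
  have hinj := upperTriangularRowMul_injective (β := β) hα hδ
  rw [eisG_eq_tsum_residueClass, ← tsum_mul_left]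
  simp only [eisTerm_upperTriangular k hδ, ← mul_assoc, ← zpow_add₀ hδ', neg_add_cancel,
    zpow_zero, one_mul]
  rw [← tsum_image (eisTerm k z) hinj.injOn, Set.image_sdiff hinj, Set.image_singleton,
    upperTriangularRowMul_zero]

theorem tsum_biUnion_residueClass_sdiff_zero {k : ℕ} (hk : 3 ≤ k) (τ : UpperHalfPlane) (m : ℕ)
    {S : Finset (ℤ × ℤ)} (hS : S ⊆ residueBox m) :
    ∑' q : ↥((⋃ p ∈ S, residueClass m p) \ {0}), eisTerm k τ q =
      ∑ p ∈ S, eisG k m p.1 p.2 τ := by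
  have hdisj : (S : Set (ℤ × ℤ)).PairwiseDisjoint fun p => residueClass m p \ {0} :=
    ((pairwiseDisjoint_residueClass m).subset (by exact_mod_cast hS)).mono
      fun _ => Set.sdiff_subset
  have hsdiff : (⋃ p ∈ S, residueClass m p) \ {0} = ⋃ p ∈ S, residueClass m p \ {0} := by
    simp only [Set.iUnion_sdiff]
  rw [hsdiff, Summable.tsum_finset_bUnion_disjoint hdisj
    fun p _ => (summable_eisTerm hk τ).subtype _]
  simp only [eisG_eq_tsum_residueClass]

/-- For `k ≥ 3` and positive integers `N, M`, the weight-`k` slash action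
of an upper-triangular matrix `[[α, β], [0, δ]]` (with `α, β, δ` nonnegative integers and
`αδ = M`) on the level-`N` Eisenstein series `G_{k,N,c',d'}` is a finite linear combination
of level-`MN` Eisenstein series `G_{k,MN,c'',d''}`, where the pairs `(c'', d'')` satisfy
`c'' ≡ α c' (mod α N)` and `d'' ≡ δ d' + β c' (mod gcd(β, δ) N)`. -/
theorem slash_eisG_is_combination_of_level_MN (k N M : ℕ) (hk : 3 ≤ k) (hN : 0 < N)
    (hM : 0 < M) (c' d' : ℤ) (α β δ : ℕ) (hαδ : α * δ = M) :
    ∃ (S : Finset (ℤ × ℤ)) (a : ℤ × ℤ → ℂ),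
      (∀ p ∈ S, p.1 ≡ (α : ℤ) * c' [ZMOD ((α : ℤ) * N)] ∧
        p.2 ≡ (δ : ℤ) * d' + (β : ℤ) * c' [ZMOD ((Nat.gcd β δ : ℤ) * N)]) ∧
      ∀ τ : UpperHalfPlane,
        ((δ : ℂ)) ^ (-(k : ℤ)) * eisG k N c' d' (((α : ℂ) * (τ : ℂ) + (β : ℂ)) / (δ : ℂ)) =
          ∑ p ∈ S, a p * eisG k (M * N) p.1 p.2 (τ : ℂ) := by
  classical
  obtain ⟨hα, hδ⟩ : α ≠ 0 ∧ δ ≠ 0 := mul_ne_zero_iff.1 (hαδ ▸ hM.ne')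
  have hMN : ((M * N : ℕ) : ℤ) = α * δ * N := by rw [← hαδ]; push_cast; ring
  set L := upperTriangularRowMul α β δ '' residueClass N (c', d')
  set S := (residueBox (M * N : ℕ)).filter (· ∈ L)
  have hcover : ⋃ p ∈ S, residueClass (M * N : ℕ) p = L :=
    biUnion_residueClass_filter_residueBox (by positivity)
      fun q hq => hMN ▸ residueClass_subset_image_residueClass _ _ hq
  refine ⟨S, fun _ => 1,
    fun p hp => modEq_of_mem_image_residueClass N c' d' (Finset.mem_filter.1 hp).2, fun τ => ?_⟩
  have h := zpow_neg_mul_eisG_eq_tsum_image k N c' d' (β := β) (Int.natCast_ne_zero.2 hα)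
    (Int.natCast_ne_zero.2 hδ) τ
  push_cast at h
  simp only [one_mul]
  rw [← tsum_biUnion_residueClass_sdiff_zero hk τ _ (Finset.filter_subset _ _), hcover]
  exact h
end
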